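/- arXiv:math/0108048 — 5 statements merged into one kernel-verified Lean document; each statement's English description precedes it below -/
import Mathlib

section
/- Let V = (v₁, v₂) be a C¹ unit vector field on an open set U ⊂ ℝ² with div V = 0, and let u : U → ℝ be a C¹ solution of the linear first-order PDE v₂·(u_x - y) - v₁·(u_y + x) = 0. Then at every point of U where (u_x - y)² + (u_y + x)² ≠ 0, u satisfies the Heisenberg minimal surface equation div((p,q)/√(p²+q²)) = 0 with p = u_x - y, q = u_y + x, and moreover the unit vector (p,q)/√(p²+q²) equals ±V at such points. -/
open MeasureTheory Real Filter

/-- `p = u_x - y`, the X-derivative of `F(x,y,z) = u(x,y) - z`. -/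
noncomputable def pA (u : ℝ × ℝ → ℝ) (z : ℝ × ℝ) : ℝ :=
  deriv (fun x => u (x, z.2)) z.1 - z.2

/-- `q = u_y + x`, the Y-derivative of `F(x,y,z) = u(x,y) - z`. -/
noncomputable def qA (u : ℝ × ℝ → ℝ) (z : ℝ × ℝ) : ℝ :=
  deriv (fun y => u (z.1, y)) z.2 + z.1

/-- first component of the horizontal Gauss map -/
noncomputable def nh1 (u : ℝ × ℝ → ℝ) (z : ℝ × ℝ) : ℝ :=
  pA u z / Real.sqrt ((pA u z) ^ 2 + (qA u z) ^ 2)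

/-- second component of the horizontal Gauss map -/
noncomputable def nh2 (u : ℝ × ℝ → ℝ) (z : ℝ × ℝ) : ℝ :=
  qA u z / Real.sqrt ((pA u z) ^ 2 + (qA u z) ^ 2)

/-- the Heisenberg minimal surface operator: planar divergence of the horizontal Gauss map -/
noncomputable def msOp (u : ℝ × ℝ → ℝ) (z : ℝ × ℝ) : ℝ :=
  deriv (fun x => nh1 u (x, z.2)) z.1 + deriv (fun y => nh2 u (z.1, y)) z.2

/-!
The transport equation says that `(p, q)` is parallel to the unit field `V`, so
`(p, q) = S V` with `S = p v₁ + q v₂` and `√(p² + q²) = |S|`. Hence the horizontal Gauss map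
is `sign S • V`. As `u` is `C¹`, `S` is continuous, so where it does not vanish its sign is
constant nearby: there the Gauss map is `±V`, and its divergence is `±div V = 0`.
-/

open Topology

section PartialDerivatives

variable {𝕜 F : Type*} [NontriviallyNormedField 𝕜] [NormedAddCommGroup F] [NormedSpace 𝕜 F]
  {u v : 𝕜 × 𝕜 → F} {z : 𝕜 × 𝕜}

theorem DifferentiableAt.deriv_prodMk_fst (hu : DifferentiableAt 𝕜 u z) :
    deriv (fun x => u (x, z.2)) z.1 = fderiv 𝕜 u z (1, 0) :=
  (hu.hasFDerivAt.comp_hasDerivAt z.1 ((hasDerivAt_id z.1).prodMk (hasDerivAt_const z.1 z.2))).deriv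

theorem DifferentiableAt.deriv_prodMk_snd (hu : DifferentiableAt 𝕜 u z) :
    deriv (fun y => u (z.1, y)) z.2 = fderiv 𝕜 u z (0, 1) :=
  (hu.hasFDerivAt.comp_hasDerivAt z.2 ((hasDerivAt_const z.2 z.1).prodMk (hasDerivAt_id z.2))).deriv

theorem Filter.EventuallyEq.deriv_prodMk_fst (h : u =ᶠ[𝓝 z] v) :
    deriv (fun x => u (x, z.2)) z.1 = deriv (fun x => v (x, z.2)) z.1 :=
  EventuallyEq.deriv_eq
    (((continuous_id.prodMk continuous_const).tendsto z.1).eventually h :)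

theorem Filter.EventuallyEq.deriv_prodMk_snd (h : u =ᶠ[𝓝 z] v) :
    deriv (fun y => u (z.1, y)) z.2 = deriv (fun y => v (z.1, y)) z.2 :=
  EventuallyEq.deriv_eq
    (((continuous_const.prodMk continuous_id).tendsto z.2).eventually h :)

variable {U : Set (𝕜 × 𝕜)}

theorem ContDiffOn.continuousOn_deriv_prodMk_fst (hu : ContDiffOn 𝕜 1 u U) (hU : IsOpen U) :
    ContinuousOn (fun z => deriv (fun x => u (x, z.2)) z.1) U := by
  refine ((hu.continuousOn_fderiv_of_isOpen hU le_rfl).clm_apply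
    (continuousOn_const (c := ((1 : 𝕜), (0 : 𝕜))))).congr fun z hz => ?_
  exact ((hu.differentiableOn one_ne_zero).differentiableAt (hU.mem_nhds hz)).deriv_prodMk_fst

theorem ContDiffOn.continuousOn_deriv_prodMk_snd (hu : ContDiffOn 𝕜 1 u U) (hU : IsOpen U) :
    ContinuousOn (fun z => deriv (fun y => u (z.1, y)) z.2) U := by
  refine ((hu.continuousOn_fderiv_of_isOpen hU le_rfl).clm_apply
    (continuousOn_const (c := ((0 : 𝕜), (1 : 𝕜))))).congr fun z hz => ?_
  exact ((hu.differentiableOn one_ne_zero).differentiableAt (hU.mem_nhds hz)).deriv_prodMk_snd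

end PartialDerivatives

theorem ContinuousAt.eventually_sign_eq {X : Type*} [TopologicalSpace X] {f : X → ℝ} {x : X}
    (hf : ContinuousAt f x) (hx : f x ≠ 0) :
    ∀ᶠ y in 𝓝 x, SignType.sign (f y) = SignType.sign (f x) :=
  ((continuousAt_sign_of_ne_zero hx).comp hf).eventually_mem
    ((isOpen_discrete {SignType.sign (f x)}).mem_nhds rfl)

theorem eq_mul_of_sq_add_sq_eq_one {R : Type*} [CommRing R] {a b p q : R}
    (hab : a ^ 2 + b ^ 2 = 1) (h : b * p - a * q = 0) : p = (p * a + q * b) * a := by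
  linear_combination (-p) * hab + b * h

theorem sq_add_sq_eq_sq_of_cross_eq_zero {R : Type*} [CommRing R] {a b p q : R}
    (hab : a ^ 2 + b ^ 2 = 1) (h : b * p - a * q = 0) : p ^ 2 + q ^ 2 = (p * a + q * b) ^ 2 := by
  linear_combination (-(p ^ 2 + q ^ 2)) * hab + (b * p - a * q) * h

theorem div_sqrt_sq_add_sq_eq_sign_mul_left {a b p q : ℝ}
    (hab : a ^ 2 + b ^ 2 = 1) (h : b * p - a * q = 0) :
    p / √(p ^ 2 + q ^ 2) = SignType.sign (p * a + q * b) * a := by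
  have hp := eq_mul_of_sq_add_sq_eq_one hab h
  rw [sq_add_sq_eq_sq_of_cross_eq_zero hab h, sqrt_sq_eq_abs]
  generalize p * a + q * b = s at hp ⊢
  rcases eq_or_ne s 0 with rfl | hs
  · simp [hp]
  · nth_rw 1 [hp, ← sign_mul_abs s]
    field_simp

theorem div_sqrt_sq_add_sq_eq_sign_mul_right {a b p q : ℝ}
    (hab : a ^ 2 + b ^ 2 = 1) (h : b * p - a * q = 0) :
    q / √(p ^ 2 + q ^ 2) = SignType.sign (p * a + q * b) * b := by
  rw [add_comm (p ^ 2), add_comm (p * a)]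
  exact div_sqrt_sq_add_sq_eq_sign_mul_left (by linear_combination hab) (by linear_combination -h)

/-- Prescribed Gauss map: divergence-free unit `C¹` vector fields and
solutions of the associated transport equation give minimal surfaces. -/
theorem prescribed_gauss_map (U : Set (ℝ × ℝ)) (hU : IsOpen U)
    (v1 v2 : ℝ × ℝ → ℝ) (hv1 : ContDiffOn ℝ 1 v1 U) (hv2 : ContDiffOn ℝ 1 v2 U)
    (hunit : ∀ z ∈ U, (v1 z) ^ 2 + (v2 z) ^ 2 = 1)
    (hdiv : ∀ z ∈ U,
      deriv (fun x => v1 (x, z.2)) z.1 + deriv (fun y => v2 (z.1, y)) z.2 = 0)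
    (u : ℝ × ℝ → ℝ) (hu : ContDiffOn ℝ 1 u U)
    (hpde : ∀ z ∈ U, v2 z * pA u z - v1 z * qA u z = 0) :
    ∀ z ∈ U, (pA u z) ^ 2 + (qA u z) ^ 2 ≠ 0 →
      msOp u z = 0 ∧
      ((nh1 u z, nh2 u z) = (v1 z, v2 z) ∨
       (nh1 u z, nh2 u z) = (-v1 z, -v2 z)) := by
  intro z hz hnz
  set S : ℝ × ℝ → ℝ := fun w => pA u w * v1 w + qA u w * v2 w
  have hS : ContinuousAt S z := by
    have hp : ContinuousOn (pA u) U :=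
      (hu.continuousOn_deriv_prodMk_fst hU).sub continuous_snd.continuousOn
    have hq : ContinuousOn (qA u) U :=
      (hu.continuousOn_deriv_prodMk_snd hU).add continuous_fst.continuousOn
    exact ((hp.mul hv1.continuousOn).add (hq.mul hv2.continuousOn)).continuousAt
      (hU.mem_nhds hz)
  have hSz : S z ≠ 0 := by
    rw [sq_add_sq_eq_sq_of_cross_eq_zero (hunit z hz) (hpde z hz)] at hnz
    simpa using hnz
  set σ : ℝ := (SignType.sign (S z) : ℝ)
  have hN1 : nh1 u =ᶠ[𝓝 z] fun w => σ * v1 w := by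
    filter_upwards [hS.eventually_sign_eq hSz, hU.mem_nhds hz] with w hw hwU
    rw [nh1, div_sqrt_sq_add_sq_eq_sign_mul_left (hunit w hwU) (hpde w hwU), hw]
  have hN2 : nh2 u =ᶠ[𝓝 z] fun w => σ * v2 w := by
    filter_upwards [hS.eventually_sign_eq hSz, hU.mem_nhds hz] with w hw hwU
    rw [nh2, div_sqrt_sq_add_sq_eq_sign_mul_right (hunit w hwU) (hpde w hwU), hw]
  refine ⟨?_, ?_⟩
  · rw [msOp, hN1.deriv_prodMk_fst, hN2.deriv_prodMk_snd, deriv_const_mul_field,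
      deriv_const_mul_field, ← mul_add, hdiv z hz, mul_zero]
  · rw [hN1.self_of_nhds, hN2.self_of_nhds]
    rcases hSz.lt_or_gt with h | h <;> simp [σ, h]
end

section
/- For any α ∈ (-1,1) and any C¹ function g : ℝ → ℝ, the function u(x,y) = (α/√(1-α²))·x² + xy + g(y + (α/√(1-α²))·x) satisfies the Heisenberg minimal surface equation at every noncharacteristic point, and its unit horizontal normal equals ±(α, √(1-α²)) at such points. -/
open MeasureTheory Real Filter

open Topology

/-!
Writing `s = √(1 - α²)`, `β = α / s` and `Q = 2x + g'(y + βx)`, one has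
`(p, q) = (βQ, Q) = (Q / s) • (α, s)`, a scalar multiple of a fixed unit vector. Where `Q ≠ 0` the
horizontal normal is therefore `± (α, s)`; since `g` is `C¹`, `Q` is continuous, so the sign is
locally constant, the normal is locally constant, and its divergence vanishes.
-/

section HorizontalNormal

variable {u : ℝ × ℝ → ℝ} {z : ℝ × ℝ}

theorem nh_eq_of_pA_qA_eq_mul {w : ℝ × ℝ} {r a b : ℝ} (hab : a ^ 2 + b ^ 2 = 1) (hr : 0 < r)
    (hp : pA u w = r * a) (hq : qA u w = r * b) : (nh1 u w, nh2 u w) = (a, b) := by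
  have hsqrt : √(pA u w ^ 2 + qA u w ^ 2) = r := by
    rw [hp, hq, show (r * a) ^ 2 + (r * b) ^ 2 = r ^ 2 by linear_combination r ^ 2 * hab]
    exact sqrt_sq hr.le
  rw [nh1, nh2, hsqrt, hp, hq, mul_div_cancel_left₀ _ hr.ne', mul_div_cancel_left₀ _ hr.ne']

theorem msOp_eq_zero_of_eventually_nh_eq (c : ℝ × ℝ)
    (h : ∀ᶠ w in 𝓝 z, (nh1 u w, nh2 u w) = c) : msOp u z = 0 := by
  have hx : (fun x => nh1 u (x, z.2)) =ᶠ[𝓝 z.1] fun _ => c.1 :=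
    Eventually.mono ((Continuous.prodMk_left z.2).tendsto z.1 h)
      fun _ hw => congrArg Prod.fst hw
  have hy : (fun y => nh2 u (z.1, y)) =ᶠ[𝓝 z.2] fun _ => c.2 :=
    Eventually.mono ((Continuous.prodMk_right z.1).tendsto z.2 h)
      fun _ hw => congrArg Prod.snd hw
  rw [msOp, hx.deriv_eq, hy.deriv_eq, deriv_const, deriv_const, add_zero]

theorem eventually_nh_eq_of_pA_qA_eq_mul {r : ℝ × ℝ → ℝ} {a b : ℝ} (hab : a ^ 2 + b ^ 2 = 1)
    (hr : ContinuousAt r z) (hrz : 0 < r z) (hp : ∀ᶠ w in 𝓝 z, pA u w = r w * a)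
    (hq : ∀ᶠ w in 𝓝 z, qA u w = r w * b) : ∀ᶠ w in 𝓝 z, (nh1 u w, nh2 u w) = (a, b) := by
  filter_upwards [hr.eventually (eventually_gt_nhds hrz), hp, hq] with w hrw hpw hqw
  exact nh_eq_of_pA_qA_eq_mul hab hrw hpw hqw

theorem msOp_eq_zero_and_nh_eq_of_pA_qA_eq_mul {r : ℝ × ℝ → ℝ} {a b : ℝ}
    (hab : a ^ 2 + b ^ 2 = 1) (hr : ContinuousAt r z) (hp : ∀ᶠ w in 𝓝 z, pA u w = r w * a)
    (hq : ∀ᶠ w in 𝓝 z, qA u w = r w * b) (hz : pA u z ^ 2 + qA u z ^ 2 ≠ 0) :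
    msOp u z = 0 ∧ ((nh1 u z, nh2 u z) = (a, b) ∨ (nh1 u z, nh2 u z) = (-a, -b)) := by
  have hrz : r z ≠ 0 := by
    rintro hr0
    apply hz
    rw [hp.self_of_nhds, hq.self_of_nhds, hr0]
    ring
  rcases hrz.lt_or_gt with hneg | hpos
  · have hab' : (-a) ^ 2 + (-b) ^ 2 = 1 := by linear_combination hab
    have h := eventually_nh_eq_of_pA_qA_eq_mul hab' hr.neg (neg_pos.mpr hneg)
      (hp.mono fun w hw => by rw [hw, Pi.neg_apply]; ring)
      (hq.mono fun w hw => by rw [hw, Pi.neg_apply]; ring)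
    exact ⟨msOp_eq_zero_of_eventually_nh_eq _ h, Or.inr h.self_of_nhds⟩
  · have h := eventually_nh_eq_of_pA_qA_eq_mul hab hr hpos hp hq
    exact ⟨msOp_eq_zero_of_eventually_nh_eq _ h, Or.inl h.self_of_nhds⟩

end HorizontalNormal

section ConstGaussGraph

variable {g : ℝ → ℝ}

def constGaussGraph (β : ℝ) (g : ℝ → ℝ) (w : ℝ × ℝ) : ℝ :=
  β * w.1 ^ 2 + w.1 * w.2 + g (w.2 + β * w.1)

theorem pA_constGaussGraph (β : ℝ) (hg : Differentiable ℝ g) (w : ℝ × ℝ) :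
    pA (constGaussGraph β g) w = β * (2 * w.1 + deriv g (w.2 + β * w.1)) := by
  have hin : HasDerivAt (fun x : ℝ => w.2 + β * x) β w.1 := by
    simpa using ((hasDerivAt_id w.1).const_mul β).const_add w.2
  have hsq : HasDerivAt (fun x : ℝ => β * x ^ 2) (β * (2 * w.1)) w.1 := by
    simpa using (hasDerivAt_pow 2 w.1).const_mul β
  have h : HasDerivAt (fun x => constGaussGraph β g (x, w.2))
      (β * (2 * w.1) + w.2 + deriv g (w.2 + β * w.1) * β) w.1 :=
    (hsq.add (hasDerivAt_mul_const w.2)).add ((hg _).hasDerivAt.comp w.1 hin)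
  rw [pA, h.deriv]
  ring

theorem qA_constGaussGraph (β : ℝ) (hg : Differentiable ℝ g) (w : ℝ × ℝ) :
    qA (constGaussGraph β g) w = 2 * w.1 + deriv g (w.2 + β * w.1) := by
  have h : HasDerivAt (fun y => constGaussGraph β g (w.1, y))
      (0 + w.1 + deriv g (w.2 + β * w.1) * 1) w.2 :=
    ((hasDerivAt_const w.2 (β * w.1 ^ 2)).add (hasDerivAt_const_mul w.1)).add
      ((hg _).hasDerivAt.comp w.2 ((hasDerivAt_id' w.2).add_const (β * w.1)))
  rw [qA, h.deriv]
  ring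

end ConstGaussGraph

/-- The constant-Gauss-map family of minimal graphs. -/
theorem constant_gauss_map_family (α : ℝ) (hα : α ∈ Set.Ioo (-1 : ℝ) 1)
    (g : ℝ → ℝ) (hg : ContDiff ℝ 1 g) (u : ℝ × ℝ → ℝ)
    (hu : u = fun w =>
      α / Real.sqrt (1 - α ^ 2) * w.1 ^ 2 + w.1 * w.2 +
        g (w.2 + α / Real.sqrt (1 - α ^ 2) * w.1))
    (z : ℝ × ℝ) (hz : (pA u z) ^ 2 + (qA u z) ^ 2 ≠ 0) :
    msOp u z = 0 ∧
    ((nh1 u z, nh2 u z) = (α, Real.sqrt (1 - α ^ 2)) ∨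
     (nh1 u z, nh2 u z) = (-α, -Real.sqrt (1 - α ^ 2))) := by
  obtain ⟨hα₁, hα₂⟩ := hα
  set s := √(1 - α ^ 2)
  have hs2 : s ^ 2 = 1 - α ^ 2 := sq_sqrt (by nlinarith)
  have hs : s ≠ 0 := (sqrt_pos.mpr (by nlinarith)).ne'
  have hg' : Differentiable ℝ g := hg.differentiable one_ne_zero
  have hdg : Continuous (deriv g) := hg.continuous_deriv le_rfl
  replace hu : u = constGaussGraph (α / s) g := hu
  subst hu
  refine msOp_eq_zero_and_nh_eq_of_pA_qA_eq_mul
    (r := fun w => (2 * w.1 + deriv g (w.2 + α / s * w.1)) / s) (by linear_combination hs2)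
    (by fun_prop) (.of_forall fun w => ?_) (.of_forall fun w => ?_) hz
  · rw [pA_constGaussGraph _ hg']
    ring
  · rw [qA_constGaussGraph _ hg']
    field_simp
end

section
/- For any C¹ function g : ℝ → ℝ, the function u(x,y) = g(y/x) satisfies the Heisenberg minimal surface equation on the half-plane x > 0, at every point where (u_x - y)² + (u_y + x)² ≠ 0. -/
/-!
For `u = g (y / x)` the Euler relation `x u_x + y u_y = 0` makes the horizontal gradient
`(p, q) = (u_x - y, u_y + x)` a multiple `λ • (-y, x)` of the rotation field, with
`λ = (g' (y / x) + x²) / x²`. At a noncharacteristic point `λ ≠ 0`, and since `g'` is continuous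
the sign of `λ` is locally constant; hence near that point the horizontal Gauss map is the
constant `± 1` times `(-y, x) / √(x² + y²)`, a divergence-free field.
-/

open MeasureTheory Real Filter

open Topology

theorem hasDerivAt_div_sqrt (a : ℝ) {q : ℝ → ℝ} {q' t : ℝ} (hq : HasDerivAt q q' t)
    (h : 0 < q t) :
    HasDerivAt (fun t => a / √(q t)) (-(a * q') / (2 * q t * √(q t))) t := by
  have hs : √(q t) ≠ 0 := (Real.sqrt_pos.mpr h).ne'
  refine ((hasDerivAt_const t a).div ((Real.hasDerivAt_sqrt h.ne').comp t hq) hs).congr_deriv ?_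
  rw [Function.comp_apply, Real.sq_sqrt h.le]
  field_simp
  ring

theorem deriv_add_deriv_rotation_eq_zero (σ : ℝ) {x y : ℝ} (h : 0 < x ^ 2 + y ^ 2) :
    deriv (fun x' => σ * -y / √(x' ^ 2 + y ^ 2)) x +
      deriv (fun y' => σ * x / √(x ^ 2 + y' ^ 2)) y = 0 := by
  have hx : HasDerivAt (fun x' => x' ^ 2 + y ^ 2) (2 * x) x := by
    simpa using (hasDerivAt_pow 2 x).add_const (y ^ 2)
  have hy : HasDerivAt (fun y' => x ^ 2 + y' ^ 2) (2 * y) y := by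
    simpa using (hasDerivAt_pow 2 y).const_add (x ^ 2)
  rw [(hasDerivAt_div_sqrt _ hx h).deriv, (hasDerivAt_div_sqrt _ hy h).deriv]
  ring

theorem div_abs_eq_sign {α : Type*} [Field α] [LinearOrder α] [IsStrictOrderedRing α] (a : α) :
    a / |a| = SignType.sign a := by
  rcases eq_or_ne a 0 with rfl | ha
  · simp
  · rw [div_eq_iff (abs_ne_zero.mpr ha), sign_mul_abs]

theorem sqrt_pA_sq_add_qA_sq {u : ℝ × ℝ → ℝ} {z : ℝ × ℝ} {c : ℝ}
    (hp : pA u z = c * -z.2) (hq : qA u z = c * z.1) :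
    √(pA u z ^ 2 + qA u z ^ 2) = |c| * √(z.1 ^ 2 + z.2 ^ 2) := by
  rw [hp, hq, ← Real.sqrt_sq_eq_abs, ← Real.sqrt_mul (sq_nonneg c)]
  ring_nf

theorem nh1_eq_sign_mul {u : ℝ × ℝ → ℝ} {z : ℝ × ℝ} {c : ℝ}
    (hp : pA u z = c * -z.2) (hq : qA u z = c * z.1) :
    nh1 u z = SignType.sign c * -z.2 / √(z.1 ^ 2 + z.2 ^ 2) := by
  rw [nh1, sqrt_pA_sq_add_qA_sq hp hq, hp, mul_div_mul_comm, div_abs_eq_sign,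
    mul_div_assoc]

theorem nh2_eq_sign_mul {u : ℝ × ℝ → ℝ} {z : ℝ × ℝ} {c : ℝ}
    (hp : pA u z = c * -z.2) (hq : qA u z = c * z.1) :
    nh2 u z = SignType.sign c * z.1 / √(z.1 ^ 2 + z.2 ^ 2) := by
  rw [nh2, sqrt_pA_sq_add_qA_sq hp hq, hq, mul_div_mul_comm, div_abs_eq_sign,
    mul_div_assoc]

theorem msOp_eq_of_eventuallyEq {u : ℝ × ℝ → ℝ} {z : ℝ × ℝ} {f₁ f₂ : ℝ × ℝ → ℝ}
    (h₁ : nh1 u =ᶠ[𝓝 z] f₁) (h₂ : nh2 u =ᶠ[𝓝 z] f₂) :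
    msOp u z = deriv (fun x => f₁ (x, z.2)) z.1 + deriv (fun y => f₂ (z.1, y)) z.2 := by
  have hx : Tendsto (fun x => (x, z.2)) (𝓝 z.1) (𝓝 z) :=
    (Continuous.prodMk_left z.2).tendsto z.1
  have hy : Tendsto (fun y => (z.1, y)) (𝓝 z.2) (𝓝 z) :=
    (Continuous.prodMk_right z.1).tendsto z.2
  exact congrArg₂ (· + ·) (h₁.comp_tendsto hx).deriv_eq (h₂.comp_tendsto hy).deriv_eq

noncomputable def helicoidFactor (g : ℝ → ℝ) (z : ℝ × ℝ) : ℝ :=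
  (deriv g (z.2 / z.1) + z.1 ^ 2) / z.1 ^ 2

theorem pA_helicoid {g : ℝ → ℝ} {z : ℝ × ℝ} (hx : z.1 ≠ 0)
    (hg : DifferentiableAt ℝ g (z.2 / z.1)) :
    pA (fun w => g (w.2 / w.1)) z = helicoidFactor g z * -z.2 := by
  have h : HasDerivAt (fun x => g (z.2 / x)) _ z.1 :=
    hg.hasDerivAt.comp z.1 ((hasDerivAt_const z.1 z.2).div (hasDerivAt_id z.1) hx)
  rw [pA, h.deriv, helicoidFactor]
  field_simp
  ring

theorem qA_helicoid {g : ℝ → ℝ} {z : ℝ × ℝ} (hx : z.1 ≠ 0)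
    (hg : DifferentiableAt ℝ g (z.2 / z.1)) :
    qA (fun w => g (w.2 / w.1)) z = helicoidFactor g z * z.1 := by
  have h : HasDerivAt (fun y => g (y / z.1)) _ z.2 :=
    hg.hasDerivAt.comp z.2 ((hasDerivAt_id z.2).div_const z.1)
  rw [qA, h.deriv, helicoidFactor]
  field_simp

theorem continuousAt_helicoidFactor {g : ℝ → ℝ} (hg : ContDiff ℝ 1 g) {z : ℝ × ℝ}
    (hx : z.1 ≠ 0) : ContinuousAt (helicoidFactor g) z := by
  have hg' : Continuous (deriv g) := hg.continuous_deriv le_rfl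
  unfold helicoidFactor
  fun_prop (disch := simpa)

/-- For `g ∈ C¹`, the surface `z = g(y/x)` satisfies the Heisenberg minimal
surface equation on the half-plane `x > 0` at noncharacteristic points. -/
theorem helicoidal_family_minimal (g : ℝ → ℝ) (hg : ContDiff ℝ 1 g)
    (z : ℝ × ℝ) (hx : 0 < z.1)
    (hz : (pA (fun w => g (w.2 / w.1)) z) ^ 2 +
          (qA (fun w => g (w.2 / w.1)) z) ^ 2 ≠ 0) :
    msOp (fun w => g (w.2 / w.1)) z = 0 := by
  have hgd : Differentiable ℝ g := hg.differentiable one_ne_zero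
  have hc : helicoidFactor g z ≠ 0 := by
    intro h
    rw [pA_helicoid hx.ne' (hgd _), qA_helicoid hx.ne' (hgd _), h] at hz
    simp at hz
  set σ := SignType.sign (helicoidFactor g z)
  have hsign : ∀ᶠ w in 𝓝 z, SignType.sign (helicoidFactor g w) = σ :=
    ((continuousAt_sign_of_ne_zero hc).comp (continuousAt_helicoidFactor hg hx.ne')).eventually_mem
      ((isOpen_discrete {σ}).mem_nhds rfl)
  have hev : ∀ᶠ w in 𝓝 z, w.1 ≠ 0 ∧ SignType.sign (helicoidFactor g w) = σ :=
    (continuous_fst.continuousAt.eventually_ne hx.ne').and hsign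
  rw [msOp_eq_of_eventuallyEq (f₁ := fun w => σ * -w.2 / √(w.1 ^ 2 + w.2 ^ 2))
    (f₂ := fun w => σ * w.1 / √(w.1 ^ 2 + w.2 ^ 2))]
  · exact deriv_add_deriv_rotation_eq_zero _ (by positivity)
  · filter_upwards [hev] with w ⟨hw, hσ⟩
    rw [← hσ]
    exact nh1_eq_sign_mul (pA_helicoid hw (hgd _)) (qA_helicoid hw (hgd _))
  · filter_upwards [hev] with w ⟨hw, hσ⟩
    rw [← hσ]
    exact nh2_eq_sign_mul (pA_helicoid hw (hgd _)) (qA_helicoid hw (hgd _))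
end

section
/- If u : ℝ² → ℝ is C² and satisfies the Heisenberg minimal surface equation (div of the horizontal Gauss map is zero), then for every λ > 0 the Riemannian mean curvature operator satisfies H_λ(u) = (1/λ²)·Δu / ((u_x - y)² + (u_y + x)² + 1/λ²)^{3/2}, where Δu = u_xx + u_yy; in particular H_λ(u) → 0 pointwise as λ → ∞ at noncharacteristic points. -/
open MeasureTheory Real Filter

noncomputable def uxx (u : ℝ × ℝ → ℝ) (z : ℝ × ℝ) : ℝ :=
  deriv (fun x => deriv (fun t => u (t, z.2)) x) z.1

noncomputable def uyy (u : ℝ × ℝ → ℝ) (z : ℝ × ℝ) : ℝ :=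
  deriv (fun y => deriv (fun t => u (z.1, t)) y) z.2

/-- The Riemannian mean curvature operator of the graph of `u` in `(H, g_l)`. -/
noncomputable def Hlam (l : ℝ) (u : ℝ × ℝ → ℝ) (z : ℝ × ℝ) : ℝ :=
  deriv (fun x =>
    pA u (x, z.2) /
      Real.sqrt ((pA u (x, z.2)) ^ 2 + (qA u (x, z.2)) ^ 2 + 1 / l ^ 2)) z.1 +
  deriv (fun y =>
    qA u (z.1, y) /
      Real.sqrt ((pA u (z.1, y)) ^ 2 + (qA u (z.1, y)) ^ 2 + 1 / l ^ 2)) z.2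

/-!
Write `P = u_x - y`, `Q = u_y + x` and `W_c = √(P² + Q² + c)`. Differentiating,
`∂_x(P/W_c) + ∂_y(Q/W_c) = (N + c (P_x + Q_y)) / W_c³` with
`N = P_x Q² - P Q (Q_x + P_y) + Q_y P²` independent of `c`.
The minimal surface equation is the case `c = 0`, so it says `N = 0` at noncharacteristic points;
for `c = 1/λ²` only `c (P_x + Q_y) = Δu / λ²` survives, and it vanishes as `λ → ∞`.
-/

open Topology

noncomputable section

def partialX (f : ℝ × ℝ → ℝ) (z : ℝ × ℝ) : ℝ :=
  deriv (fun x => f (x, z.2)) z.1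

def partialY (f : ℝ × ℝ → ℝ) (z : ℝ × ℝ) : ℝ :=
  deriv (fun y => f (z.1, y)) z.2

def divNormalized (c : ℝ) (P Q : ℝ × ℝ → ℝ) (z : ℝ × ℝ) : ℝ :=
  partialX (fun w => P w / √(P w ^ 2 + Q w ^ 2 + c)) z +
    partialY (fun w => Q w / √(P w ^ 2 + Q w ^ 2 + c)) z

def divNormalizedNumerator (P Q : ℝ × ℝ → ℝ) (z : ℝ × ℝ) : ℝ :=
  partialX P z * Q z ^ 2 - P z * Q z * (partialX Q z + partialY P z) + partialY Q z * P z ^ 2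

end

section Slices

variable {𝕜 F : Type*} [NontriviallyNormedField 𝕜] [NormedAddCommGroup F] [NormedSpace 𝕜 F]
  {f : 𝕜 × 𝕜 → F} {z : 𝕜 × 𝕜}

theorem DifferentiableAt.hasDerivAt_slice_fst (h : DifferentiableAt 𝕜 f z) :
    HasDerivAt (fun x => f (x, z.2)) (fderiv 𝕜 f z (1, 0)) z.1 :=
  h.hasFDerivAt.comp_hasDerivAt_of_eq z.1 ((hasDerivAt_id z.1).prodMk (hasDerivAt_const z.1 z.2))
    rfl

theorem DifferentiableAt.hasDerivAt_slice_snd (h : DifferentiableAt 𝕜 f z) :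
    HasDerivAt (fun y => f (z.1, y)) (fderiv 𝕜 f z (0, 1)) z.2 :=
  h.hasFDerivAt.comp_hasDerivAt_of_eq z.2 ((hasDerivAt_const z.2 z.1).prodMk (hasDerivAt_id z.2))
    rfl

end Slices

theorem DifferentiableAt.hasDerivAt_partialX {f : ℝ × ℝ → ℝ} {z : ℝ × ℝ}
    (h : DifferentiableAt ℝ f z) : HasDerivAt (fun x => f (x, z.2)) (partialX f z) z.1 :=
  h.hasDerivAt_slice_fst.differentiableAt.hasDerivAt

theorem DifferentiableAt.hasDerivAt_partialY {f : ℝ × ℝ → ℝ} {z : ℝ × ℝ}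
    (h : DifferentiableAt ℝ f z) : HasDerivAt (fun y => f (z.1, y)) (partialY f z) z.2 :=
  h.hasDerivAt_slice_snd.differentiableAt.hasDerivAt

theorem partialX_eq_fderiv {f : ℝ × ℝ → ℝ} (h : Differentiable ℝ f) :
    partialX f = fun w => fderiv ℝ f w (1, 0) :=
  funext fun w => (h w).hasDerivAt_slice_fst.deriv

theorem partialY_eq_fderiv {f : ℝ × ℝ → ℝ} (h : Differentiable ℝ f) :
    partialY f = fun w => fderiv ℝ f w (0, 1) :=
  funext fun w => (h w).hasDerivAt_slice_snd.deriv

theorem ContDiff.differentiable_partialX {f : ℝ × ℝ → ℝ} (h : ContDiff ℝ 2 f) :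
    Differentiable ℝ (partialX f) := by
  rw [partialX_eq_fderiv (h.differentiable two_ne_zero)]
  exact ((h.fderiv_right one_add_one_eq_two.le).clm_apply contDiff_const).differentiable
    one_ne_zero

theorem ContDiff.differentiable_partialY {f : ℝ × ℝ → ℝ} (h : ContDiff ℝ 2 f) :
    Differentiable ℝ (partialY f) := by
  rw [partialY_eq_fderiv (h.differentiable two_ne_zero)]
  exact ((h.fderiv_right one_add_one_eq_two.le).clm_apply contDiff_const).differentiable
    one_ne_zero

theorem HasDerivAt.div_sqrt_sq_add_sq_add {P Q : ℝ → ℝ} {a p q c : ℝ} (hP : HasDerivAt P p a)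
    (hQ : HasDerivAt Q q a) (hpos : 0 < P a ^ 2 + Q a ^ 2 + c) :
    HasDerivAt (fun x => P x / √(P x ^ 2 + Q x ^ 2 + c))
      ((p * (Q a ^ 2 + c) - P a * Q a * q) / √(P a ^ 2 + Q a ^ 2 + c) ^ 3) a := by
  have hW : HasDerivAt (fun x => √(P x ^ 2 + Q x ^ 2 + c))
      ((2 * P a ^ 1 * p + 2 * Q a ^ 1 * q) / (2 * √(P a ^ 2 + Q a ^ 2 + c))) a :=
    (((hP.pow 2).add (hQ.pow 2)).add_const c).sqrt hpos.ne'
  have hW0 : √(P a ^ 2 + Q a ^ 2 + c) ≠ 0 := (Real.sqrt_pos.2 hpos).ne'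
  refine (hP.div hW hW0).congr_deriv ?_
  have hsq : √(P a ^ 2 + Q a ^ 2 + c) ^ 2 = P a ^ 2 + Q a ^ 2 + c := Real.sq_sqrt hpos.le
  field_simp
  linear_combination p * hsq

theorem HasDerivAt.div_sqrt_sq_add_sq_add' {P Q : ℝ → ℝ} {a p q c : ℝ} (hP : HasDerivAt P p a)
    (hQ : HasDerivAt Q q a) (hpos : 0 < P a ^ 2 + Q a ^ 2 + c) :
    HasDerivAt (fun x => Q x / √(P x ^ 2 + Q x ^ 2 + c))
      ((q * (P a ^ 2 + c) - P a * Q a * p) / √(P a ^ 2 + Q a ^ 2 + c) ^ 3) a := by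
  simp only [add_comm (P _ ^ 2) (Q _ ^ 2), mul_comm (P a) (Q a)]
  exact hQ.div_sqrt_sq_add_sq_add hP (by linarith)

theorem divNormalized_eq {P Q : ℝ × ℝ → ℝ} {z : ℝ × ℝ} {c : ℝ} (hP : DifferentiableAt ℝ P z)
    (hQ : DifferentiableAt ℝ Q z) (hpos : 0 < P z ^ 2 + Q z ^ 2 + c) :
    divNormalized c P Q z =
      (divNormalizedNumerator P Q z + c * (partialX P z + partialY Q z)) /
        √(P z ^ 2 + Q z ^ 2 + c) ^ 3 := by
  have hX := hP.hasDerivAt_partialX.div_sqrt_sq_add_sq_add hQ.hasDerivAt_partialX hpos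
  have hY := hP.hasDerivAt_partialY.div_sqrt_sq_add_sq_add' hQ.hasDerivAt_partialY hpos
  rw [divNormalized, partialX, partialY, hX.deriv, hY.deriv, ← add_div, divNormalizedNumerator]
  ring_nf

theorem divNormalized_eq_of_divNormalized_zero_eq_zero {P Q : ℝ × ℝ → ℝ} {z : ℝ × ℝ} {c : ℝ}
    (hP : DifferentiableAt ℝ P z) (hQ : DifferentiableAt ℝ Q z) (hPQ : P z ^ 2 + Q z ^ 2 ≠ 0)
    (hc : 0 ≤ c) (h0 : divNormalized 0 P Q z = 0) :
    divNormalized c P Q z = c * (partialX P z + partialY Q z) / √(P z ^ 2 + Q z ^ 2 + c) ^ 3 := by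
  have hpos0 : 0 < P z ^ 2 + Q z ^ 2 + 0 := by positivity
  rw [divNormalized_eq hP hQ hpos0, div_eq_zero_iff, zero_mul, add_zero] at h0
  have hN : divNormalizedNumerator P Q z = 0 :=
    h0.resolve_right (pow_ne_zero 3 (Real.sqrt_pos.2 hpos0).ne')
  rw [divNormalized_eq hP hQ (by positivity), hN, zero_add]

theorem tendsto_inv_sq_mul_div_sqrt_add_inv_sq_pow_three {a : ℝ} (ha : 0 < a) (b : ℝ) :
    Tendsto (fun l : ℝ => 1 / l ^ 2 * b / √(a + 1 / l ^ 2) ^ 3) atTop (𝓝 0) := by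
  have hc : Tendsto (fun l : ℝ => 1 / l ^ 2) atTop (𝓝 0) :=
    tendsto_const_nhds.div_atTop (tendsto_pow_atTop two_ne_zero)
  have hW : Tendsto (fun l : ℝ => √(a + 1 / l ^ 2) ^ 3) atTop (𝓝 (√(a + 0) ^ 3)) :=
    ((tendsto_const_nhds.add hc).sqrt).pow 3
  have h := (hc.mul_const b).div hW (by positivity)
  rwa [zero_mul, zero_div] at h

theorem pA_eq (u : ℝ × ℝ → ℝ) : pA u = fun w => partialX u w - w.2 := rfl

theorem qA_eq (u : ℝ × ℝ → ℝ) : qA u = fun w => partialY u w + w.1 := rfl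

theorem partialX_pA (u : ℝ × ℝ → ℝ) : partialX (pA u) = uxx u :=
  funext fun _ => deriv_sub_const _

theorem partialY_qA (u : ℝ × ℝ → ℝ) : partialY (qA u) = uyy u :=
  funext fun _ => deriv_add_const _

theorem ContDiff.differentiable_pA {u : ℝ × ℝ → ℝ} (hu : ContDiff ℝ 2 u) :
    Differentiable ℝ (pA u) := by
  rw [pA_eq]
  exact hu.differentiable_partialX.sub differentiable_snd

theorem ContDiff.differentiable_qA {u : ℝ × ℝ → ℝ} (hu : ContDiff ℝ 2 u) :
    Differentiable ℝ (qA u) := by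
  rw [qA_eq]
  exact hu.differentiable_partialY.add differentiable_fst

theorem Hlam_eq_divNormalized (l : ℝ) (u : ℝ × ℝ → ℝ) :
    Hlam l u = divNormalized (1 / l ^ 2) (pA u) (qA u) := rfl

theorem msOp_eq_divNormalized (u : ℝ × ℝ → ℝ) : msOp u = divNormalized 0 (pA u) (qA u) := by
  funext z
  simp only [divNormalized, add_zero]
  rfl

/-- If `u` is `C²` and satisfies the Heisenberg minimal surface equation, then
`H_l(u) = (1/l²)·(u_xx + u_yy) / W_l³` with `W_l = √(p² + q² + 1/l²)`, and
`H_l(u) → 0` pointwise as `l → ∞` at noncharacteristic points. -/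
theorem riemannian_mean_curvature_formula (u : ℝ × ℝ → ℝ) (hu : ContDiff ℝ 2 u)
    (hms : ∀ z : ℝ × ℝ, (pA u z) ^ 2 + (qA u z) ^ 2 ≠ 0 → msOp u z = 0) :
    (∀ l : ℝ, 0 < l → ∀ z : ℝ × ℝ, (pA u z) ^ 2 + (qA u z) ^ 2 ≠ 0 →
      Hlam l u z =
        (1 / l ^ 2) * (uxx u z + uyy u z) /
          Real.sqrt ((pA u z) ^ 2 + (qA u z) ^ 2 + 1 / l ^ 2) ^ 3) ∧
    (∀ z : ℝ × ℝ, (pA u z) ^ 2 + (qA u z) ^ 2 ≠ 0 →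
      Filter.Tendsto (fun l => Hlam l u z) Filter.atTop (nhds 0)) := by
  have formula : ∀ l : ℝ, ∀ z : ℝ × ℝ, (pA u z) ^ 2 + (qA u z) ^ 2 ≠ 0 →
      Hlam l u z = (1 / l ^ 2) * (uxx u z + uyy u z) /
        √((pA u z) ^ 2 + (qA u z) ^ 2 + 1 / l ^ 2) ^ 3 := fun l z hz => by
    rw [Hlam_eq_divNormalized, ← partialX_pA, ← partialY_qA]
    refine divNormalized_eq_of_divNormalized_zero_eq_zero (hu.differentiable_pA z)
      (hu.differentiable_qA z) hz (by positivity) ?_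
    rw [← msOp_eq_divNormalized]
    exact hms z hz
  refine ⟨fun l _ => formula l, fun z hz => ?_⟩
  refine (tendsto_inv_sq_mul_div_sqrt_add_inv_sq_pow_three
    (lt_of_le_of_ne (by positivity) hz.symm) (uxx u z + uyy u z)).congr' ?_
  filter_upwards with l using (formula l z hz).symm
end

section
/- For a, b > 0 with b·r² > 1, the function v(r) = (√(b r² - 1))/b - a·arctan(1/√(b r² - 1)) satisfies the ODE v''(r) = -(v'(r)·(2a² + 2r²a) + r²·v'(r)³) / (r·(a² + 2r²a + r⁴)) on the region r > 1/√b. -/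
/-!
With `w = √(b r² - 1)`, the arctan term contributes `a / (r w)` to `v'`, so
`v' = (r² + a) / (r w)`. Differentiating once more and eliminating `b` through `w² = b r² - 1`
gives `v'' = -(r² + a + 2 a w²) / (r² w³)`. Since `a² + 2 r² a + r⁴ = (r² + a)²`, the right-hand
side of the ODE evaluated at `v' = (r² + a) / (r w)` simplifies to the same expression,
with no relation between `r` and `w` needed.
-/

open Real Filter Topology

noncomputable def corkscrewProfile (a b s : ℝ) : ℝ :=
  √(b * s ^ 2 - 1) / b - a * arctan (1 / √(b * s ^ 2 - 1))

section
variable {a b s r : ℝ}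

lemma hasDerivAt_sqrt_mul_sq_sub_one (hs : 1 < b * s ^ 2) :
    HasDerivAt (fun s => √(b * s ^ 2 - 1)) (b * s / √(b * s ^ 2 - 1)) s := by
  have hquad : HasDerivAt (fun s : ℝ => b * s ^ 2 - 1) (b * (2 * s)) s := by
    simpa using ((hasDerivAt_pow 2 s).const_mul b).sub_const 1
  refine (hquad.sqrt (by linarith)).congr_deriv ?_
  have hw : 0 < √(b * s ^ 2 - 1) := sqrt_pos.mpr (by linarith)
  field_simp

lemma hasDerivAt_corkscrewProfile (hs : 1 < b * s ^ 2) :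
    HasDerivAt (corkscrewProfile a b) ((s ^ 2 + a) / (s * √(b * s ^ 2 - 1))) s := by
  have hw : 0 < √(b * s ^ 2 - 1) := sqrt_pos.mpr (by linarith)
  have hw2 : √(b * s ^ 2 - 1) ^ 2 = b * s ^ 2 - 1 := sq_sqrt (by linarith)
  have hb : b ≠ 0 := by rintro rfl; simp at hs; linarith
  have hs0 : s ≠ 0 := by rintro rfl; simp at hs; linarith
  have hsqrt := hasDerivAt_sqrt_mul_sq_sub_one hs
  have harctan := ((hasDerivAt_const s (1 : ℝ)).fun_div hsqrt hw.ne').arctan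
  refine ((hsqrt.div_const b).sub (harctan.const_mul a)).congr_deriv ?_
  field_simp
  rw [hw2]
  ring

lemma deriv_corkscrewProfile_eventuallyEq (hr : 1 < b * r ^ 2) :
    deriv (corkscrewProfile a b) =ᶠ[𝓝 r] fun s => (s ^ 2 + a) / (s * √(b * s ^ 2 - 1)) := by
  have hopen : IsOpen {s : ℝ | 1 < b * s ^ 2} := isOpen_lt continuous_const (by fun_prop)
  filter_upwards [hopen.mem_nhds hr] with s hs using (hasDerivAt_corkscrewProfile hs).deriv

lemma hasDerivAt_deriv_corkscrewProfile (hr : 1 < b * r ^ 2) :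
    HasDerivAt (deriv (corkscrewProfile a b))
      (-(r ^ 2 + a + 2 * a * √(b * r ^ 2 - 1) ^ 2) / (r ^ 2 * √(b * r ^ 2 - 1) ^ 3)) r := by
  have hw : 0 < √(b * r ^ 2 - 1) := sqrt_pos.mpr (by linarith)
  have hw2 : √(b * r ^ 2 - 1) ^ 2 = b * r ^ 2 - 1 := sq_sqrt (by linarith)
  have hr0 : r ≠ 0 := by rintro rfl; simp at hr; linarith
  have hnum : HasDerivAt (fun s : ℝ => s ^ 2 + a) (2 * r) r := by
    simpa using (hasDerivAt_pow 2 r).add_const a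
  have hden := (hasDerivAt_id' r).fun_mul (hasDerivAt_sqrt_mul_sq_sub_one hr)
  refine ((hnum.fun_div hden (by positivity)).congr_of_eventuallyEq
    (deriv_corkscrewProfile_eventuallyEq hr)).congr_deriv ?_
  generalize √(b * r ^ 2 - 1) = w at hw hw2 ⊢
  obtain rfl : b = (w ^ 2 + 1) / r ^ 2 := by field_simp; linarith
  field_simp
  ring

lemma corkscrew_ode_rhs_eq {w : ℝ} (hra : r ^ 2 + a ≠ 0) (hr : r ≠ 0) (hw : w ≠ 0) :
    -((r ^ 2 + a) / (r * w) * (2 * a ^ 2 + 2 * r ^ 2 * a) + r ^ 2 * ((r ^ 2 + a) / (r * w)) ^ 3) /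
        (r * (a ^ 2 + 2 * r ^ 2 * a + r ^ 4)) =
      -(r ^ 2 + a + 2 * a * w ^ 2) / (r ^ 2 * w ^ 3) := by
  rw [show a ^ 2 + 2 * r ^ 2 * a + r ^ 4 = (r ^ 2 + a) ^ 2 by ring]
  field_simp
  ring
end

/-- The closed-form function
`v(r) = √(br² - 1)/b - a·arctan(1/√(br² - 1))` solves the corkscrew-invariant
reduction of the Heisenberg minimal surface equation
`v'' = -(v'(2a² + 2r²a) + r²(v')³)/(r(a² + 2r²a + r⁴))` for `r > 1/√b`. -/
theorem corkscrew_ode (a b : ℝ) (ha : 0 < a) (hb : 0 < b) (r : ℝ)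
    (hr : 1 / Real.sqrt b < r) :
    deriv (deriv (fun s =>
      Real.sqrt (b * s ^ 2 - 1) / b -
        a * Real.arctan (1 / Real.sqrt (b * s ^ 2 - 1)))) r =
    -(deriv (fun s =>
        Real.sqrt (b * s ^ 2 - 1) / b -
          a * Real.arctan (1 / Real.sqrt (b * s ^ 2 - 1))) r *
        (2 * a ^ 2 + 2 * r ^ 2 * a) +
      r ^ 2 *
        (deriv (fun s =>
          Real.sqrt (b * s ^ 2 - 1) / b -
            a * Real.arctan (1 / Real.sqrt (b * s ^ 2 - 1))) r) ^ 3) /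
      (r * (a ^ 2 + 2 * r ^ 2 * a + r ^ 4)) := by
  change deriv (deriv (corkscrewProfile a b)) r = -(deriv (corkscrewProfile a b) r *
    (2 * a ^ 2 + 2 * r ^ 2 * a) + r ^ 2 * deriv (corkscrewProfile a b) r ^ 3) /
      (r * (a ^ 2 + 2 * r ^ 2 * a + r ^ 4))
  have hbr : 1 < b * r ^ 2 := by
    have hsb : 0 < √b := sqrt_pos.mpr hb
    rw [div_lt_iff₀ hsb] at hr
    nlinarith [sq_sqrt hb.le]
  have hr0 : r ≠ 0 := by rintro rfl; simp at hbr; linarith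
  rw [(hasDerivAt_deriv_corkscrewProfile hbr).deriv, (hasDerivAt_corkscrewProfile hbr).deriv,
    corkscrew_ode_rhs_eq (by positivity) hr0 (sqrt_pos.mpr (by linarith)).ne']
end
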